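/- The number of games of plates and olives of length n in which the number of plate-remove moves (simple plus complex, not counting the final one) is at least 16n/log n is at most (2/e − c)^{n+o(n)} n^n for some constant c > 0; in particular it is asymptotically negligible compared to M_n ≥ (2n-1)!!. -/

import Mathlib

open Filter Asymptotics

/-- A plate-add move: an empty plate (a `0`) is put down. -/
def PPlus (a b : Multiset ℕ) : Prop := b = 0 ::ₘ a

/-- A first olive-add move: an olive is put down on an empty plate. -/
def OPlusF (a b : Multiset ℕ) : Prop := (0 : ℕ) ∈ a ∧ b = 1 ::ₘ a.erase 0

/-- A later olive-add move: an olive is put down on a plate already holding olives. -/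
def OPlusL (a b : Multiset ℕ) : Prop := ∃ x ∈ a, 0 < x ∧ b = (x + 1) ::ₘ a.erase x

/-- An olive-add move (first or later). -/
def OPlus (a b : Multiset ℕ) : Prop := OPlusF a b ∨ OPlusL a b

/-- An olive-remove move: an olive is removed from a nonempty plate. -/
def OMinus (a b : Multiset ℕ) : Prop := ∃ x ∈ a, 0 < x ∧ b = (x - 1) ::ₘ a.erase x

/-- A simple plate-remove move: an empty plate is removed. -/
def PMinusS (a b : Multiset ℕ) : Prop := a = 0 ::ₘ b

/-- A complex plate-remove move: the olives on two plates that both have olives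
are combined on one of them, and the other plate is removed. -/
def PMinusC (a b : Multiset ℕ) : Prop :=
  ∃ x ∈ a, ∃ y ∈ a.erase x, 0 < x ∧ 0 < y ∧ b = (x + y) ::ₘ (a.erase x).erase y

/-- A legal move of the game of plates and olives. -/
def Step (a b : Multiset ℕ) : Prop :=
  PPlus a b ∨ OPlus a b ∨ OMinus a b ∨ PMinusS a b ∨ PMinusC a b

/-- A game of plates and olives of length `n`: a sequence of `2n+3`
configurations (multisets recording the number of olives on each plate),
starting and ending at the empty table, linked by `2n+2` legal moves, with no
intermediate return to the empty table. -/
def IsGame (n : ℕ) (P : Fin (2 * n + 2 + 1) → Multiset ℕ) : Prop :=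
  P 0 = 0 ∧ P (Fin.last (2 * n + 2)) = 0 ∧
  (∀ i : Fin (2 * n + 2), Step (P i.castSucc) (P i.succ)) ∧
  (∀ i : Fin (2 * n + 2 + 1), i ≠ 0 → i ≠ Fin.last (2 * n + 2) → P i ≠ 0)

/-- `M n` is the number of games of plates and olives of length `n`. -/
noncomputable def M (n : ℕ) : ℕ := Nat.card {P : Fin (2 * n + 2 + 1) → Multiset ℕ // IsGame n P}

/-- The number of plate-remove moves of a game, not counting the final one. -/
noncomputable def pRemoves (n : ℕ) (P : Fin (2 * n + 2 + 1) → Multiset ℕ) : ℕ :=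
  Nat.card {i : Fin (2 * n + 2) // (i : ℕ) < 2 * n + 1 ∧
    (PMinusS (P i.castSucc) (P i.succ) ∨ PMinusC (P i.castSucc) (P i.succ))}


/-!
Record a game by the kinds of its moves and, for each O⁺ₗ, O⁻ or P⁻_c move, which of its few
possible outcomes it takes; these are indexed by one or two of the distinct sizes of the
nonempty plates. The olive count changes by at most one per move and vanishes at both ends, so
the table never holds more than `n + 1` olives and there are at most `√(3n)` such sizes. The
number of plates plus the number of nonempty plates also vanishes at both ends, and a move
choosing `w` sizes raises it by at most `1 - w`, a plate removal by at most `-w`. Hence a game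
with `r` plate removals chooses at most `2n + 2 - r` sizes, and there are at most
`6^(2n+2) √(3n)^(2n+2-r)` such games. For `r ≥ 16n / log n` this is at most `(1/2)^n n^n` once
`log n ≥ 8`, and `1/2 < 2/e`.
-/

open Finset

section Walks

variable {m : ℕ}

theorem last_add_sum_le_of_succ_add_le (Φ : Fin (m + 1) → ℕ) (c : Fin m → ℕ)
    (h : ∀ i, Φ i.succ + c i ≤ Φ i.castSucc + 1) :
    Φ (Fin.last m) + ∑ i, c i ≤ Φ 0 + m := by
  have hsum : ∑ i : Fin m, (Φ i.succ + c i) ≤ ∑ i : Fin m, (Φ i.castSucc + 1) :=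
    sum_le_sum fun i _ => h i
  simp only [sum_add_distrib, sum_const, card_univ, Fintype.card_fin, smul_eq_mul,
    mul_one] at hsum
  have := Fin.sum_univ_succ Φ
  have := Fin.sum_univ_castSucc Φ
  omega

theorem le_val_of_succ_le_add_one (Φ : Fin (m + 1) → ℕ) (h0 : Φ 0 = 0)
    (h : ∀ i : Fin m, Φ i.succ ≤ Φ i.castSucc + 1) (j : Fin (m + 1)) : Φ j ≤ j := by
  induction j using Fin.induction with
  | zero => simp [h0]
  | succ i ih =>
    have := h i
    simp only [Fin.val_succ, Fin.val_castSucc] at ih ⊢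
    omega

theorem two_mul_le_of_succ_le_add_one (Φ : Fin (m + 1) → ℕ) (h0 : Φ 0 = 0)
    (hlast : Φ (Fin.last m) = 0) (hup : ∀ i : Fin m, Φ i.succ ≤ Φ i.castSucc + 1)
    (hdown : ∀ i : Fin m, Φ i.castSucc ≤ Φ i.succ + 1) (j : Fin (m + 1)) : 2 * Φ j ≤ m := by
  have hfwd := le_val_of_succ_le_add_one Φ h0 hup j
  have hbwd := le_val_of_succ_le_add_one (Φ ∘ Fin.rev) (by simpa using hlast)
    (fun i => by simpa [Fin.rev_succ, Fin.rev_castSucc] using hdown i.rev) j.rev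
  simp only [Function.comp_apply, Fin.rev_rev, Fin.val_rev] at hbwd
  omega

/-- A walk is determined by its step types `τ` and the positions of its steps in the lists of
candidates `next (τ i) _`. -/
theorem card_walks_le {α κ : Type*} [DecidableEq α] (next : κ → α → Finset α)
    (c : κ → ℕ) (W : Finset (Fin m → κ)) (a₀ : α) (p : (Fin (m + 1) → α) → Prop)
    (hp : ∀ P, p P → P 0 = a₀ ∧ ∃ τ ∈ W, ∀ i,
      P i.succ ∈ next (τ i) (P i.castSucc) ∧ #(next (τ i) (P i.castSucc)) ≤ c (τ i)) :
    Nat.card {P // p P} ≤ ∑ τ ∈ W, ∏ i, c (τ i) := by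
  choose h0 τ hτW hτ using fun P : {P // p P} => hp P.1 P.2
  let code (P : {P // p P}) (i : Fin m) : ℕ :=
    (next (τ P i) (P.1 i.castSucc)).toList.idxOf (P.1 i.succ)
  let S := W.sigma fun σ => Fintype.piFinset fun i => range (c (σ i))
  have hS (P : {P // p P}) : (⟨τ P, code P⟩ : Σ _ : Fin m → κ, Fin m → ℕ) ∈ S := by
    refine mem_sigma.2 ⟨hτW P, Fintype.mem_piFinset.2 fun i => mem_range.2 ?_⟩
    refine lt_of_lt_of_le ?_ (hτ P i).2
    rw [← length_toList]
    exact List.idxOf_lt_length_iff.2 (mem_toList.2 (hτ P i).1)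
  have hinj : Function.Injective fun P => (⟨_, hS P⟩ : S) := by
    intro P Q hPQ
    have hPQ' : (⟨τ P, code P⟩ : Σ _ : Fin m → κ, Fin m → ℕ) = ⟨τ Q, code Q⟩ :=
      congrArg Subtype.val hPQ
    obtain ⟨hτPQ, hcode⟩ := Sigma.mk.inj_iff.1 hPQ'
    replace hcode := eq_of_heq hcode
    refine Subtype.ext (funext fun j => ?_)
    induction j using Fin.induction with
    | zero => rw [h0, h0]
    | succ i ih =>
      have := congrFun hcode i
      simp only [code, hτPQ, ih] at this
      exact (List.idxOf_inj (mem_toList.2 (by simpa [hτPQ, ih] using (hτ P i).1))).1 this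
  calc Nat.card {P // p P} ≤ Nat.card S := Nat.card_le_card_of_injective _ hinj
    _ = ∑ τ ∈ W, ∏ i, c (τ i) := by
      simp only [S, Nat.card_eq_finsetCard, card_sigma, Fintype.card_piFinset, card_range]

end Walks

theorem Finset.card_mul_card_add_one_le_two_mul_sum (s : Finset ℕ) (hs : ∀ x ∈ s, 0 < x) :
    #s * (#s + 1) ≤ 2 * ∑ x ∈ s, x := by
  induction s using Finset.induction_on_max with
  | empty => simp
  | insert a s hlt ih =>
    have ha : 0 < a := hs a (mem_insert_self a s)
    have hcard : #s + 1 ≤ a := by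
      have := card_le_card fun x hx => mem_Ioo.2 ⟨hs x (mem_insert_of_mem hx), hlt x hx⟩
      simp only [Nat.card_Ioo] at this
      omega
    have := ih fun x hx => hs x (mem_insert_of_mem hx)
    rw [card_insert_of_notMem fun h => lt_irrefl a (hlt a h),
      sum_insert fun h => lt_irrefl a (hlt a h)]
    nlinarith

inductive MoveKind
  | pPlus | oPlusF | oPlusL | oMinus | pMinusS | pMinusC
  deriving DecidableEq

def occupiedSizes (a : Multiset ℕ) : Finset ℕ := {x ∈ a.toFinset | 0 < x}

def occupiedPlates (a : Multiset ℕ) : ℕ := Multiset.card (a.filter (0 < ·))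

namespace MoveKind

instance : Fintype MoveKind :=
  ⟨{pPlus, oPlusF, oPlusL, oMinus, pMinusS, pMinusC}, fun k => by cases k <;> simp⟩

def IsMove : MoveKind → Multiset ℕ → Multiset ℕ → Prop
  | pPlus => PPlus
  | oPlusF => OPlusF
  | oPlusL => OPlusL
  | oMinus => OMinus
  | pMinusS => PMinusS
  | pMinusC => PMinusC

def weight : MoveKind → ℕ
  | pPlus | oPlusF | pMinusS => 0
  | oPlusL | oMinus => 1
  | pMinusC => 2

def next : MoveKind → Multiset ℕ → Finset (Multiset ℕ)
  | pPlus, a => {0 ::ₘ a}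
  | oPlusF, a => {1 ::ₘ a.erase 0}
  | oPlusL, a => (occupiedSizes a).image fun x => (x + 1) ::ₘ a.erase x
  | oMinus, a => (occupiedSizes a).image fun x => (x - 1) ::ₘ a.erase x
  | pMinusS, a => {a.erase 0}
  | pMinusC, a => (occupiedSizes a ×ˢ occupiedSizes a).image fun p =>
      (p.1 + p.2) ::ₘ (a.erase p.1).erase p.2

theorem card_next_le (k : MoveKind) (a : Multiset ℕ) :
    #(k.next a) ≤ #(occupiedSizes a) ^ k.weight := by
  cases k <;> simp only [next, weight, card_singleton, pow_zero, pow_one, le_refl, card_image_le]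
  exact card_image_le.trans (by rw [card_product, sq])

variable {k : MoveKind} {a b : Multiset ℕ}

theorem IsMove.mem_next (h : k.IsMove a b) : b ∈ k.next a := by
  cases k <;> simp only [IsMove, next, mem_singleton, mem_image, mem_product, occupiedSizes,
    mem_filter, Multiset.mem_toFinset, Prod.exists] at h ⊢
  case pPlus => exact h
  case oPlusF => exact h.2
  case oPlusL | oMinus =>
    obtain ⟨x, hx, hxp, rfl⟩ := h
    exact ⟨x, ⟨hx, hxp⟩, rfl⟩
  case pMinusS =>
    subst h
    simp
  case pMinusC =>
    obtain ⟨x, hx, y, hy, hxp, hyp, rfl⟩ := h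
    exact ⟨x, y, ⟨⟨hx, hxp⟩, Multiset.mem_of_mem_erase hy, hyp⟩, rfl⟩

theorem IsMove.sum_le (h : k.IsMove a b) : b.sum ≤ a.sum + 1 ∧ a.sum ≤ b.sum + 1 := by
  cases k <;> simp only [IsMove] at h
  case pPlus | pMinusS => subst h; simp
  case oPlusF =>
    obtain ⟨h0, rfl⟩ := h
    obtain ⟨a, rfl⟩ := Multiset.exists_cons_of_mem h0
    simp only [Multiset.erase_cons_head, Multiset.sum_cons]
    omega
  case oPlusL | oMinus =>
    obtain ⟨x, hx, -, rfl⟩ := h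
    obtain ⟨a, rfl⟩ := Multiset.exists_cons_of_mem hx
    simp only [Multiset.erase_cons_head, Multiset.sum_cons]
    omega
  case pMinusC =>
    obtain ⟨x, hx, y, hy, -, -, rfl⟩ := h
    obtain ⟨a, rfl⟩ := Multiset.exists_cons_of_mem hx
    rw [Multiset.erase_cons_head] at hy ⊢
    obtain ⟨a, rfl⟩ := Multiset.exists_cons_of_mem hy
    simp only [Multiset.erase_cons_head, Multiset.sum_cons]
    omega

theorem IsMove.card_add_occupiedPlates_le (h : k.IsMove a b) :
    Multiset.card b + occupiedPlates b + k.weight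
        + (if Multiset.card b < Multiset.card a then 1 else 0) ≤
      Multiset.card a + occupiedPlates a + 1 := by
  cases k <;> simp only [IsMove] at h
  case pPlus | pMinusS =>
    subst h
    simp [occupiedPlates, weight] <;> omega
  case oPlusF =>
    obtain ⟨h0, rfl⟩ := h
    obtain ⟨a, rfl⟩ := Multiset.exists_cons_of_mem h0
    simp [occupiedPlates, weight]
    omega
  case oPlusL | oMinus =>
    obtain ⟨x, hx, hxp, rfl⟩ := h
    obtain ⟨a, rfl⟩ := Multiset.exists_cons_of_mem hx
    by_cases hx1 : 0 < x - 1 <;>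
      simp [occupiedPlates, weight, Multiset.filter_cons_of_pos, hxp, hx1]
  case pMinusC =>
    obtain ⟨x, hx, y, hy, hxp, hyp, rfl⟩ := h
    obtain ⟨a, rfl⟩ := Multiset.exists_cons_of_mem hx
    rw [Multiset.erase_cons_head] at hy ⊢
    obtain ⟨a, rfl⟩ := Multiset.exists_cons_of_mem hy
    simp [occupiedPlates, weight, hxp, hyp]
    omega

end MoveKind

theorem Step.exists_isMove {a b : Multiset ℕ} (h : Step a b) : ∃ k : MoveKind, k.IsMove a b := by
  rcases h with h | (h | h) | h | h | h
  exacts [⟨.pPlus, h⟩, ⟨.oPlusF, h⟩, ⟨.oPlusL, h⟩, ⟨.oMinus, h⟩, ⟨.pMinusS, h⟩, ⟨.pMinusC, h⟩]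

theorem card_lt_card_of_pMinusS_or_pMinusC {a b : Multiset ℕ} (h : PMinusS a b ∨ PMinusC a b) :
    Multiset.card b < Multiset.card a := by
  rcases h with rfl | ⟨x, hx, y, hy, -, -, rfl⟩
  · simp
  · have := Multiset.card_erase_add_one hx
    have := Multiset.card_erase_add_one hy
    simp only [Multiset.card_cons]
    omega

section Game

variable {n : ℕ} {P : Fin (2 * n + 2 + 1) → Multiset ℕ}

theorem IsGame.exists_kinds (hP : IsGame n P) :
    ∃ τ : Fin (2 * n + 2) → MoveKind, ∀ i, (τ i).IsMove (P i.castSucc) (P i.succ) :=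
  ⟨fun i => (hP.2.2.1 i).exists_isMove.choose, fun i => (hP.2.2.1 i).exists_isMove.choose_spec⟩

theorem IsGame.sum_le (hP : IsGame n P) (j : Fin (2 * n + 2 + 1)) : (P j).sum ≤ n + 1 := by
  obtain ⟨τ, hτ⟩ := hP.exists_kinds
  have := two_mul_le_of_succ_le_add_one (fun j => (P j).sum) (by simp [hP.1])
    (by simp [hP.2.1]) (fun i => (hτ i).sum_le.1) (fun i => (hτ i).sum_le.2) j
  omega

theorem IsGame.pRemoves_add_sum_weight_le (hP : IsGame n P) {τ : Fin (2 * n + 2) → MoveKind}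
    (hτ : ∀ i, (τ i).IsMove (P i.castSucc) (P i.succ)) :
    pRemoves n P + ∑ i, (τ i).weight ≤ 2 * n + 2 := by
  have hpot := last_add_sum_le_of_succ_add_le
    (fun j => Multiset.card (P j) + occupiedPlates (P j))
    (fun i => (τ i).weight +
      if Multiset.card (P i.succ) < Multiset.card (P i.castSucc) then 1 else 0)
    (fun i => by have := (hτ i).card_add_occupiedPlates_le; omega)
  simp only [hP.1, hP.2.1, sum_add_distrib, sum_boole, Nat.cast_id] at hpot
  have hrem : pRemoves n P ≤
      #{i : Fin (2 * n + 2) | Multiset.card (P i.succ) < Multiset.card (P i.castSucc)} := by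
    rw [pRemoves, ← Fintype.card_subtype, ← Nat.card_eq_fintype_card]
    exact Nat.card_le_card_of_injective
      (Subtype.impEmbedding _ _ fun i hi => card_lt_card_of_pMinusS_or_pMinusC hi.2)
      (Subtype.impEmbedding _ _ _).injective
  simp only [Multiset.card_zero, occupiedPlates, Multiset.filter_zero, zero_add] at hpot
  omega

theorem card_occupiedSizes_le_sqrt {a : Multiset ℕ} (hn : 1 ≤ n) (ha : a.sum ≤ n + 1) :
    #(occupiedSizes a) ≤ Nat.sqrt (3 * n) := by
  have hsum : ∑ x ∈ occupiedSizes a, x ≤ a.sum := by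
    have hle : (occupiedSizes a).val ≤ a := (Multiset.filter_le _ _).trans (Multiset.dedup_le a)
    obtain ⟨u, hu⟩ := Multiset.le_iff_exists_add.1 hle
    calc ∑ x ∈ occupiedSizes a, x ≤ ((occupiedSizes a).val + u).sum := by
          rw [Multiset.sum_add, sum_eq_multiset_sum, Multiset.map_id']
          exact Nat.le_add_right _ _
      _ = a.sum := by rw [← hu]
  have := card_mul_card_add_one_le_two_mul_sum (occupiedSizes a) fun x hx => (mem_filter.1 hx).2
  exact Nat.le_sqrt'.2 (by nlinarith)

theorem card_games_le (hn : 1 ≤ n) (x : ℝ) :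
    Nat.card {P // IsGame n P ∧ x ≤ pRemoves n P} ≤
      6 ^ (2 * n + 2) * Nat.sqrt (3 * n) ^ (2 * n + 2 - ⌈x⌉₊) := by
  set K := Nat.sqrt (3 * n)
  set r := ⌈x⌉₊
  calc Nat.card {P // IsGame n P ∧ x ≤ pRemoves n P}
      ≤ ∑ τ ∈ {τ : Fin (2 * n + 2) → MoveKind | ∑ i, (τ i).weight ≤ 2 * n + 2 - r},
          ∏ i, K ^ (τ i).weight := by
        refine card_walks_le MoveKind.next (K ^ ·.weight) _ 0 _ fun P ⟨hP, hr⟩ => ⟨hP.1, ?_⟩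
        obtain ⟨τ, hτ⟩ := hP.exists_kinds
        refine ⟨τ, mem_filter.2 ⟨mem_univ _, ?_⟩, fun i => ⟨(hτ i).mem_next, ?_⟩⟩
        · have := hP.pRemoves_add_sum_weight_le hτ
          have := Nat.ceil_le.2 hr
          omega
        · exact (MoveKind.card_next_le _ _).trans
            (Nat.pow_le_pow_left (card_occupiedSizes_le_sqrt hn (hP.sum_le _)) _)
    _ ≤ ∑ _τ ∈ {τ : Fin (2 * n + 2) → MoveKind | ∑ i, (τ i).weight ≤ 2 * n + 2 - r},
          K ^ (2 * n + 2 - r) := by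
        refine sum_le_sum fun τ hτ => ?_
        rw [prod_pow_eq_pow_sum]
        exact Nat.pow_le_pow_right (Nat.sqrt_pos.2 (by omega)) (mem_filter.1 hτ).2
    _ ≤ 6 ^ (2 * n + 2) * K ^ (2 * n + 2 - r) := by
        rw [sum_const, smul_eq_mul]
        refine Nat.mul_le_mul_right _ ((card_filter_le _ _).trans ?_)
        simp [show Fintype.card MoveKind = 6 from rfl]

end Game

open Real in
theorem six_pow_mul_pow_le {n K j : ℕ} (hlog : 8 ≤ log n) (hK0 : 0 < K) (hK : K ^ 2 ≤ 3 * n)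
    (hj : (j : ℝ) + 16 * n / log n ≤ 2 * n + 2) :
    ((6 ^ (2 * n + 2) * K ^ j : ℕ) : ℝ) ≤ (1 / 2 : ℝ) ^ (n : ℝ) * (n : ℝ) ^ (n : ℝ) := by
  have hn0 : (0 : ℝ) < n := by
    rcases Nat.eq_zero_or_pos n with rfl | hn
    · norm_num at hlog
    · exact_mod_cast hn
  have hL : log n ≤ n - 1 := log_le_sub_one_of_pos hn0
  have hlogK : 2 * log K ≤ log 3 + log n := by
    have := log_le_log (by positivity) (show ((K ^ 2 : ℕ) : ℝ) ≤ 3 * n by exact_mod_cast hK)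
    rwa [log_mul (by norm_num) hn0.ne', Nat.cast_pow, log_pow, Nat.cast_ofNat] at this
  have hjK : (j : ℝ) * log K ≤ (n + 1) * (log 3 + log n) - 8 * n := by
    have h3 : 0 < log 3 := log_pos (by norm_num)
    have h16 : 16 * n / log n = 2 * (8 * n / log n) := by ring
    calc (j : ℝ) * log K ≤ j / 2 * (log 3 + log n) := by
          rw [div_mul_comm, mul_comm]
          gcongr
          linarith
      _ ≤ (n + 1 - 8 * n / log n) * (log 3 + log n) := by gcongr; linarith
      _ = (n + 1) * (log 3 + log n) - 8 * n * log 3 / log n - 8 * n := by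
        field_simp
        ring
      _ ≤ (n + 1) * (log 3 + log n) - 8 * n := by
        have : 0 ≤ 8 * n * log 3 / log n := by positivity
        linarith
  have h3 : log 3 < 2 * log 2 := by
    rw [← log_rpow two_pos]
    exact log_lt_log (by norm_num) (by norm_num)
  have h2 := log_two_lt_d9
  rw [← log_le_log_iff (by positivity) (by positivity), log_mul (by positivity) (by positivity),
    log_rpow (by norm_num), log_rpow hn0, one_div, log_inv]
  push_cast
  rw [log_mul (by positivity) (by positivity), log_pow, log_pow,
    show (6 : ℝ) = 2 * 3 by norm_num, log_mul (by norm_num) (by norm_num)]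
  push_cast
  nlinarith [mul_le_mul_of_nonneg_left h3.le hn0.le, mul_le_mul_of_nonneg_left h2.le hn0.le]

/-- The number of games of plates and olives of length `n` with at least
`16n/log n` plate-remove moves (not counting the final one) is at most
`(2/e − c)^{n+o(n)} n^n` for some constant `c > 0`; in particular it is
negligible compared to `M_n ≥ (2n-1)!!`. -/
theorem stmt_17 :
    ∃ c : ℝ, 0 < c ∧ ∃ f : ℕ → ℝ, f =o[atTop] (fun n : ℕ => (n : ℝ)) ∧
      ∀ᶠ n : ℕ in atTop,
        (Nat.card {P : Fin (2 * n + 2 + 1) → Multiset ℕ // IsGame n P ∧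
            16 * (n : ℝ) / Real.log n ≤ pRemoves n P} : ℝ) ≤
          (2 / Real.exp 1 - c) ^ ((n : ℝ) + f n) * (n : ℝ) ^ (n : ℝ) := by
  refine ⟨2 / Real.exp 1 - 1 / 2, ?_, 0, isLittleO_zero _ _, ?_⟩
  · have := Real.exp_one_lt_d9
    rw [sub_pos, lt_div_iff₀ (Real.exp_pos 1)]
    linarith
  filter_upwards [(Real.tendsto_log_atTop.comp tendsto_natCast_atTop_atTop).eventually_ge_atTop 8,
    eventually_ge_atTop 1] with n hlog hn
  have hlog : 8 ≤ Real.log n := hlog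
  have hr : ⌈16 * (n : ℝ) / Real.log n⌉₊ ≤ 2 * n + 2 := by
    refine Nat.ceil_le.2 ((div_le_iff₀ (by linarith)).2 ?_)
    push_cast
    nlinarith
  rw [sub_sub_cancel, Pi.zero_apply, add_zero]
  calc (Nat.card {P // IsGame n P ∧ 16 * (n : ℝ) / Real.log n ≤ pRemoves n P} : ℝ)
      ≤ ((6 ^ (2 * n + 2) * Nat.sqrt (3 * n) ^ (2 * n + 2 - ⌈16 * (n : ℝ) / Real.log n⌉₊) : ℕ) :
          ℝ) := by
        exact_mod_cast card_games_le hn _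
    _ ≤ _ := by
        refine six_pow_mul_pow_le hlog (Nat.sqrt_pos.2 (by omega)) (Nat.sqrt_le' _) ?_
        rw [Nat.cast_sub hr]
        push_cast
        linarith [Nat.le_ceil (16 * (n : ℝ) / Real.log n)]
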